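/- Let P and Q be disjoint nonempty closed sets in Euclidean space ℝ^d and let k ≥ 2. For (k−1)-tuples (R_i, S_i)_{i=1}^{k−1} of pairs of subsets of ℝ^d with P ⊆ R_i, Q ⊆ S_i and R_i ∪ S_i = ℝ^d for all i, define F((R_i, S_i)_i) = (dom(R_{i−1}, S_{i+1}), dom(S_{i+1}, R_{i−1}))_i where R_0 = P and S_k = Q. Suppose (R⁰_i, S⁰_i)_i is such a tuple satisfying R⁰_i ⊆ R¹_i and S⁰_i ⊇ S¹_i for all i, where (R^{n+1}_i, S^{n+1}_i)_i := F((R^n_i, S^n_i)_i) for each n ∈ ℕ. Let R^∞_i = ⋃_{n∈ℕ} R^n_i and S^∞_i = ⋂_{n∈ℕ} S^n_i. Then the tuple (closure(R^∞_i), S^∞_i)_{i=1}^{k−1} is a k-gradation between P and Q. -/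

import Mathlib

/-!
The iterates increase in `R` and decrease in `S`, because `F` is monotone and starts below its
image; so `R^∞ = ⋃ R^n` and `S^∞ = ⋂ S^n` exist. The equation for `S^∞` passes to the limit by
compactness: in a proper space, the distance to a decreasing intersection of nonempty closed sets
is the supremum of the distances to the sets. For the equation for `closure R^∞`, a point `z` of
`dom(closure R^∞_{i-1}, S^∞_{i+1})` outside `R^∞_i` lies in `S^∞_i`, hence on the bisector of the
two sets. Moving `z` slightly towards a nearest point of `closure R^∞_{i-1}` makes it strictly
closer to that set than to `S^∞_{i+1}` (strict convexity of the Euclidean norm, and the two sets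
are disjoint), so `z` is a limit of points of `R^∞_i`. The disjointness holds because a common
point of `closure R^∞_j` and `S^∞_{j+1}` can be pushed down to `P` and up to `Q`.
-/

open Metric Set

/-- The dominance region of `X` over `Y`: points at least as close to `X` as to `Y`. -/
def domReg {M : Type*} [MetricSpace M] (X Y : Set M) : Set M :=
  {z | infDist z X ≤ infDist z Y}

open Filter Topology

section DomReg

variable {M : Type*} [MetricSpace M]

lemma mem_domReg {X Y : Set M} {z : M} : z ∈ domReg X Y ↔ infDist z X ≤ infDist z Y := Iff.rfl

lemma isClosed_domReg (X Y : Set M) : IsClosed (domReg X Y) :=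
  isClosed_le (continuous_infDist_pt X) (continuous_infDist_pt Y)

lemma subset_domReg (X Y : Set M) : X ⊆ domReg X Y := fun _ hz => by
  rw [mem_domReg, infDist_zero_of_mem hz]
  exact infDist_nonneg

lemma domReg_mono {X X' Y Y' : Set M} (hX : X ⊆ X') (hXne : X.Nonempty) (hY : Y' ⊆ Y)
    (hY'ne : Y'.Nonempty) : domReg X Y ⊆ domReg X' Y' := fun _ hz =>
  (infDist_le_infDist_of_subset hX hXne).trans (hz.trans (infDist_le_infDist_of_subset hY hY'ne))

lemma domReg_union_domReg (X Y : Set M) : domReg X Y ∪ domReg Y X = univ :=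
  eq_univ_of_forall fun z => le_total (infDist z X) (infDist z Y)

lemma mem_of_mem_domReg_of_mem {X Y : Set M} (hX : IsClosed X) (hXne : X.Nonempty) {z : M}
    (hz : z ∈ domReg X Y) (hzY : z ∈ Y) : z ∈ X := by
  rw [hX.mem_iff_infDist_zero hXne]
  exact le_antisymm (hz.trans_eq (infDist_zero_of_mem hzY)) infDist_nonneg

lemma infDist_iInter_le [ProperSpace M] {T : ℕ → Set M} (hT : Antitone T)
    (hcl : ∀ n, IsClosed (T n)) (hne : ∀ n, (T n).Nonempty) {x : M} {c : ℝ}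
    (hc : ∀ n, infDist x (T n) ≤ c) : infDist x (⋂ n, T n) ≤ c := by
  have hKne : ∀ n, (closedBall x c ∩ T n).Nonempty := fun n => by
    obtain ⟨y, hyT, hy⟩ := (hcl n).exists_infDist_eq_dist (hne n) x
    exact ⟨y, mem_closedBall'.2 (hy ▸ hc n), hyT⟩
  obtain ⟨y, hy⟩ := IsCompact.nonempty_iInter_of_sequence_nonempty_isCompact_isClosed
    (fun n => closedBall x c ∩ T n) (fun n => inter_subset_inter_right _ (hT n.le_succ))
    hKne ((isCompact_closedBall x c).inter_right (hcl 0))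
    (fun n => isClosed_closedBall.inter (hcl n))
  have hyT : y ∈ ⋂ n, T n := mem_iInter.2 fun n => (mem_iInter.1 hy n).2
  exact (infDist_le_dist_of_mem hyT).trans (mem_closedBall'.1 (mem_iInter.1 hy 0).1)

end DomReg

section Bisector

variable {E : Type*} [NormedAddCommGroup E] [InnerProductSpace ℝ E]

lemma eq_of_norm_sub_smul_le {u v : E} {t : ℝ} (ht0 : 0 < t) (ht1 : t < 1) (huv : ‖u‖ ≤ ‖v‖)
    (h : ‖v - t • u‖ ≤ (1 - t) * ‖u‖) : v = u := by
  have hsq : ‖v - t • u‖ ^ 2 ≤ ((1 - t) * ‖u‖) ^ 2 := pow_le_pow_left₀ (norm_nonneg _) h 2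
  rw [norm_sub_sq_real, norm_smul, real_inner_smul_right, Real.norm_eq_abs, abs_of_pos ht0] at hsq
  -- `t ‖v - u‖² ≤ (1 - t) (‖u‖² - ‖v‖²) ≤ 0`
  have hvu : ‖v - u‖ ^ 2 ≤ 0 := by
    have := mul_nonneg (sub_nonneg.2 ht1.le)
      (sub_nonneg.2 (pow_le_pow_left₀ (norm_nonneg u) huv 2))
    nlinarith [norm_sub_sq_real v u]
  exact sub_eq_zero.1 (norm_eq_zero.1 (pow_eq_zero_iff two_ne_zero |>.1
    (le_antisymm hvu (sq_nonneg _))))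

theorem mem_closure_setOf_infDist_lt [ProperSpace E] {A B : Set E} (hA : IsClosed A)
    (hAne : A.Nonempty) (hB : IsClosed B) (hBne : B.Nonempty) (hAB : Disjoint A B) {z : E}
    (hz : infDist z A = infDist z B) : z ∈ closure {w | infDist w A < infDist w B} := by
  obtain ⟨a, ha, hza⟩ := hA.exists_infDist_eq_dist hAne z
  refine mem_closure_of_tendsto (f := AffineMap.lineMap z a) (b := 𝓝[>] (0 : ℝ))
    ((AffineMap.lineMap_continuous.tendsto' 0 z (AffineMap.lineMap_apply_zero z a)).mono_left
      nhdsWithin_le_nhds) ?_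
  filter_upwards [Ioo_mem_nhdsGT one_pos] with t ⟨ht0, ht1⟩
  have hwA : infDist (AffineMap.lineMap z a t) A ≤ (1 - t) * ‖a - z‖ := by
    rw [← dist_eq_norm, dist_comm, ← abs_of_pos (sub_pos.2 ht1), ← Real.norm_eq_abs,
      ← dist_lineMap_right]
    exact infDist_le_dist_of_mem ha
  refine hwA.trans_lt (lt_of_not_ge fun hwB => ?_)
  obtain ⟨b, hb, hwb⟩ := hB.exists_infDist_eq_dist hBne (AffineMap.lineMap z a t)
  have hab : ‖a - z‖ ≤ ‖b - z‖ := by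
    rw [← dist_eq_norm, ← dist_eq_norm, dist_comm a, dist_comm b, ← hza, hz]
    exact infDist_le_dist_of_mem hb
  have hbw : ‖(b - z) - t • (a - z)‖ ≤ (1 - t) * ‖a - z‖ := by
    rw [hwb, dist_comm, dist_eq_norm, AffineMap.lineMap_apply_module] at hwB
    rwa [show (b - z) - t • (a - z) = b - ((1 - t) • z + t • a) by module]
  exact disjoint_left.1 hAB ha (sub_left_inj.1 (eq_of_norm_sub_smul_le ht0 ht1 hab hbw) ▸ hb)

end Bisector

section Iteration

variable {M : Type*} [MetricSpace M]

structure IsDomIteration (k : ℕ) (P Q : Set M) (R S : ℕ → ℕ → Set M) : Prop where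
  R_zero : ∀ n, R n 0 = P
  S_top : ∀ n, S n k = Q
  subset_R_zero : ∀ i, 0 < i → i < k → P ⊆ R 0 i
  subset_S_zero : ∀ i, 0 < i → i < k → Q ⊆ S 0 i
  R_zero_union_S_zero : ∀ i, 0 < i → i < k → R 0 i ∪ S 0 i = univ
  R_succ : ∀ n i, 0 < i → i < k → R (n + 1) i = domReg (R n (i - 1)) (S n (i + 1))
  S_succ : ∀ n i, 0 < i → i < k → S (n + 1) i = domReg (S n (i + 1)) (R n (i - 1))
  R_zero_subset_R_one : ∀ i, 0 < i → i < k → R 0 i ⊆ R 1 i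
  S_one_subset_S_zero : ∀ i, 0 < i → i < k → S 1 i ⊆ S 0 i

def limR (R : ℕ → ℕ → Set M) (i : ℕ) : Set M := closure (⋃ n, R n i)

def limS (S : ℕ → ℕ → Set M) (i : ℕ) : Set M := ⋂ n, S n i

namespace IsDomIteration

variable {k : ℕ} {P Q : Set M} {R S : ℕ → ℕ → Set M}

theorem subset_R (h : IsDomIteration k P Q R S) (n : ℕ) {i : ℕ} (hik : i < k) : P ⊆ R n i := by
  rcases Nat.eq_zero_or_pos i with rfl | hi
  · exact (h.R_zero n).ge
  cases n with
  | zero => exact h.subset_R_zero i hi hik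
  | succ n =>
    rw [h.R_succ n i hi hik]
    exact (h.subset_R n (i := i - 1) (by omega)).trans (subset_domReg _ _)

theorem subset_S (h : IsDomIteration k P Q R S) (n : ℕ) {i : ℕ} (hi : 0 < i) (hik : i ≤ k) :
    Q ⊆ S n i := by
  rcases hik.eq_or_lt with rfl | hik
  · exact (h.S_top n).ge
  cases n with
  | zero => exact h.subset_S_zero i hi hik
  | succ n =>
    rw [h.S_succ n i hi hik]
    exact (h.subset_S n (i := i + 1) (by omega) hik).trans (subset_domReg _ _)

theorem R_subset_R_succ_and_S_succ_subset_S (h : IsDomIteration k P Q R S) (hP : P.Nonempty)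
    (hQ : Q.Nonempty) (n : ℕ) :
    (∀ i < k, R n i ⊆ R (n + 1) i) ∧ (∀ i, 0 < i → i ≤ k → S (n + 1) i ⊆ S n i) := by
  have hRne : ∀ n, ∀ i < k, (R n i).Nonempty := fun n _ hik => hP.mono (h.subset_R n hik)
  have hSne : ∀ n i, 0 < i → i ≤ k → (S n i).Nonempty :=
    fun n _ hi hik => hQ.mono (h.subset_S n hi hik)
  refine ⟨fun i hik => ?_, fun i hi hik => ?_⟩
  · rcases Nat.eq_zero_or_pos i with rfl | hi
    · rw [h.R_zero, h.R_zero]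
    cases n with
    | zero => exact h.R_zero_subset_R_one i hi hik
    | succ n =>
      have ih := h.R_subset_R_succ_and_S_succ_subset_S hP hQ n
      rw [h.R_succ n i hi hik, h.R_succ (n + 1) i hi hik]
      exact domReg_mono (ih.1 _ (by omega)) (hRne n _ (by omega)) (ih.2 _ (by omega) (by omega))
        (hSne _ _ (by omega) (by omega))
  · rcases hik.eq_or_lt with rfl | hik
    · rw [h.S_top, h.S_top]
    cases n with
    | zero => exact h.S_one_subset_S_zero i hi hik
    | succ n =>
      have ih := h.R_subset_R_succ_and_S_succ_subset_S hP hQ n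
      rw [h.S_succ n i hi hik, h.S_succ (n + 1) i hi hik]
      exact domReg_mono (ih.2 _ (by omega) (by omega)) (hSne _ _ (by omega) (by omega))
        (ih.1 _ (by omega)) (hRne n _ (by omega))

theorem monotone_R (h : IsDomIteration k P Q R S) (hP : P.Nonempty) (hQ : Q.Nonempty) {i : ℕ}
    (hik : i < k) : Monotone (R · i) :=
  monotone_nat_of_le_succ fun n => (h.R_subset_R_succ_and_S_succ_subset_S hP hQ n).1 i hik

theorem antitone_S (h : IsDomIteration k P Q R S) (hP : P.Nonempty) (hQ : Q.Nonempty) {i : ℕ}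
    (hi : 0 < i) (hik : i ≤ k) : Antitone (S · i) :=
  antitone_nat_of_succ_le fun n => (h.R_subset_R_succ_and_S_succ_subset_S hP hQ n).2 i hi hik

theorem R_union_S_eq_univ (h : IsDomIteration k P Q R S) (n : ℕ) {i : ℕ} (hi : 0 < i)
    (hik : i < k) :    R n i ∪ S n i = univ := by
  cases n with
  | zero => exact h.R_zero_union_S_zero i hi hik
  | succ n => rw [h.R_succ n i hi hik, h.S_succ n i hi hik]; exact domReg_union_domReg _ _

theorem isClosed_S_succ (h : IsDomIteration k P Q R S) (hQ : IsClosed Q) (n : ℕ) {i : ℕ}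
    (hi : 0 < i) (hik : i ≤ k) : IsClosed (S (n + 1) i) := by
  rcases hik.eq_or_lt with rfl | hik
  · rwa [h.S_top]
  · rw [h.S_succ n i hi hik]
    exact isClosed_domReg _ _

theorem limR_zero (h : IsDomIteration k P Q R S) (hP : IsClosed P) : limR R 0 = P := by
  simp only [limR, h.R_zero, iUnion_const, hP.closure_eq]

theorem limS_top (h : IsDomIteration k P Q R S) : limS S k = Q := by
  simp only [limS, h.S_top, iInter_const]

theorem limR_nonempty (h : IsDomIteration k P Q R S) (hP : P.Nonempty) {i : ℕ} (hik : i < k) :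
    (limR R i).Nonempty :=
  (hP.mono (h.subset_R 0 hik)).mono ((subset_iUnion (R · i) 0).trans subset_closure)

theorem limS_nonempty (h : IsDomIteration k P Q R S) (hQ : Q.Nonempty) {i : ℕ} (hi : 0 < i)
    (hik : i ≤ k) : (limS S i).Nonempty :=
  hQ.mono (subset_iInter fun n => h.subset_S n hi hik)

theorem isClosed_limS (h : IsDomIteration k P Q R S) (hP : P.Nonempty) (hQ : Q.Nonempty)
    (hQcl : IsClosed Q) {i : ℕ} (hi : 0 < i) (hik : i ≤ k) : IsClosed (limS S i) := by
  rw [limS, ← (h.antitone_S hP hQ hi hik).iInter_nat_add 1]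
  exact isClosed_iInter fun n => h.isClosed_S_succ hQcl n hi hik

theorem mem_limS_of_notMem_iUnion (h : IsDomIteration k P Q R S) {i : ℕ} (hi : 0 < i)
    (hik : i < k) {z : M} (hz : z ∉ ⋃ n, R n i) : z ∈ limS S i :=
  mem_iInter.2 fun n => (eq_univ_iff_forall.1 (h.R_union_S_eq_univ n hi hik) z).resolve_left
    fun hzR => hz (mem_iUnion.2 ⟨n, hzR⟩)

theorem limR_subset_domReg (h : IsDomIteration k P Q R S) (hP : P.Nonempty) (hQ : Q.Nonempty)
    {i : ℕ} (hi : 0 < i) (hik : i < k) :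
    limR R i ⊆ domReg (limR R (i - 1)) (limS S (i + 1)) := by
  rw [limR, ← (h.monotone_R hP hQ hik).iUnion_nat_add 1]
  refine closure_minimal (iUnion_subset fun n => ?_) (isClosed_domReg _ _)
  rw [h.R_succ n i hi hik]
  exact domReg_mono ((subset_iUnion (R · (i - 1)) n).trans subset_closure)
    (hP.mono (h.subset_R n (by omega))) (iInter_subset _ n) (h.limS_nonempty hQ (by omega) hik)

theorem limR_subset_limR_succ (h : IsDomIteration k P Q R S) {j : ℕ} (hj : j + 1 < k) :
    limR R j ⊆ limR R (j + 1) := by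
  refine closure_mono (iUnion_subset fun n => ?_)
  have hR := h.R_succ n (j + 1) j.add_one_pos hj
  rw [Nat.add_sub_cancel] at hR
  refine (subset_domReg _ _).trans (hR ▸ subset_iUnion (R · (j + 1)) (n + 1))

theorem limS_succ_subset_limS (h : IsDomIteration k P Q R S) (hP : P.Nonempty) (hQ : Q.Nonempty)
    {j : ℕ} (hj : 0 < j) (hjk : j < k) : limS S (j + 1) ⊆ limS S j := by
  rw [limS, limS, ← (h.antitone_S hP hQ hj hjk.le).iInter_nat_add 1]
  refine subset_iInter fun n => ?_
  rw [h.S_succ n j hj hjk]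
  exact (iInter_subset _ n).trans (subset_domReg _ _)

theorem mem_P_of_mem_limR_of_mem_limS (h : IsDomIteration k P Q R S) (hP : P.Nonempty)
    (hQ : Q.Nonempty) (hPcl : IsClosed P) {z : M} :
    ∀ {j : ℕ}, j < k → z ∈ limR R j → z ∈ limS S (j + 1) → z ∈ P
  | 0, _, hzR, _ => h.limR_zero hPcl ▸ hzR
  | j + 1, hjk, hzR, hzS => by
    have hzR' := h.limR_subset_domReg hP hQ j.add_one_pos hjk hzR
    rw [Nat.add_sub_cancel] at hzR'
    exact h.mem_P_of_mem_limR_of_mem_limS hP hQ hPcl (by omega)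
      (mem_of_mem_domReg_of_mem isClosed_closure (h.limR_nonempty hP (by omega)) hzR' hzS)
      (h.limS_succ_subset_limS hP hQ j.add_one_pos hjk hzS)

variable [ProperSpace M]

theorem infDist_limS_succ_le (h : IsDomIteration k P Q R S) (hP : P.Nonempty)
    (hQ : Q.Nonempty) (hQcl : IsClosed Q) {i : ℕ} (hi : 0 < i) (hik : i < k) {z : M}
    (hz : ∀ n, z ∈ S n i) (m : ℕ) : infDist z (limS S (i + 1)) ≤ infDist z (R m (i - 1)) := by
  -- Pass to the tail `S^{n+m+1}_{i+1}`: its members are closed (`S^0` need not be), and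
  -- `z ∈ S^{n+m+2}_i` compares each of them with `R^{n+m+1}_{i-1} ⊇ R^m_{i-1}`.
  have hanti := h.antitone_S hP hQ (i := i + 1) (by omega) hik
  rw [limS, ← hanti.iInter_nat_add (m + 1)]
  refine infDist_iInter_le (fun a b hab => hanti (by omega))
    (fun n => h.isClosed_S_succ hQcl (n + m) (by omega) hik)
    (fun n => hQ.mono (h.subset_S _ (by omega) hik)) fun n => ?_
  have hzn := hz (n + m + 1 + 1)
  rw [h.S_succ _ i hi hik] at hzn
  exact hzn.trans (infDist_le_infDist_of_subset
    (h.monotone_R hP hQ (by omega) (by omega : m ≤ n + m + 1)) (hP.mono (h.subset_R m (by omega))))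

theorem limS_eq_domReg (h : IsDomIteration k P Q R S) (hP : P.Nonempty)
    (hQ : Q.Nonempty) (hQcl : IsClosed Q) {i : ℕ} (hi : 0 < i) (hik : i < k) :
    limS S i = domReg (limS S (i + 1)) (limR R (i - 1)) := by
  refine Subset.antisymm (fun z hz => ?_) fun z hz => ?_
  · have hUne : (⋃ n, R n (i - 1)).Nonempty :=
      (hP.mono (h.subset_R 0 (by omega))).mono (subset_iUnion (R · (i - 1)) 0)
    rw [mem_domReg, limR, infDist_closure, le_infDist hUne]
    intro y hy
    obtain ⟨m, hym⟩ := mem_iUnion.1 hy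
    exact (h.infDist_limS_succ_le hP hQ hQcl hi hik (mem_iInter.1 hz) m).trans
      (infDist_le_dist_of_mem hym)
  · rw [limS, ← (h.antitone_S hP hQ hi hik.le).iInter_nat_add 1]
    refine mem_iInter.2 fun n => ?_
    rw [h.S_succ n i hi hik]
    exact domReg_mono (iInter_subset _ n) (h.limS_nonempty hQ (by omega) hik)
      ((subset_iUnion (R · (i - 1)) n).trans subset_closure)
      (hP.mono (h.subset_R n (by omega))) hz

theorem mem_Q_of_mem_limR_of_mem_limS (h : IsDomIteration k P Q R S) (hP : P.Nonempty)
    (hQ : Q.Nonempty) (hQcl : IsClosed Q) {z : M} {j : ℕ} (hjk : j < k) (hzR : z ∈ limR R j)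
    (hzS : z ∈ limS S (j + 1)) : z ∈ Q := by
  rcases (Nat.succ_le_of_lt hjk).eq_or_lt with hj | hj
  · rwa [← h.limS_top, ← hj]
  have hzS' := (h.limS_eq_domReg hP hQ hQcl j.add_one_pos hj).subset hzS
  rw [Nat.add_sub_cancel] at hzS'
  exact h.mem_Q_of_mem_limR_of_mem_limS hP hQ hQcl hj (h.limR_subset_limR_succ hj hzR)
    (mem_of_mem_domReg_of_mem (h.isClosed_limS hP hQ hQcl (by omega) (by omega))
      (h.limS_nonempty hQ (by omega) (by omega)) hzS' hzR)
termination_by k - j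

theorem disjoint_limR_limS (h : IsDomIteration k P Q R S) (hP : P.Nonempty) (hQ : Q.Nonempty)
    (hPcl : IsClosed P) (hQcl : IsClosed Q) (hPQ : Disjoint P Q) {j : ℕ} (hjk : j < k) :
    Disjoint (limR R j) (limS S (j + 1)) :=
  disjoint_left.2 fun _ hzR hzS => disjoint_left.1 hPQ
    (h.mem_P_of_mem_limR_of_mem_limS hP hQ hPcl hjk hzR hzS)
    (h.mem_Q_of_mem_limR_of_mem_limS hP hQ hQcl hjk hzR hzS)

end IsDomIteration

end Iteration

theorem IsDomIteration.limR_eq_domReg {E : Type*} [NormedAddCommGroup E] [InnerProductSpace ℝ E]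
    [ProperSpace E] {k : ℕ} {P Q : Set E} {R S : ℕ → ℕ → Set E} (h : IsDomIteration k P Q R S)
    (hP : P.Nonempty) (hQ : Q.Nonempty) (hPcl : IsClosed P) (hQcl : IsClosed Q)
    (hPQ : Disjoint P Q) {i : ℕ} (hi : 0 < i) (hik : i < k) :
    limR R i = domReg (limR R (i - 1)) (limS S (i + 1)) := by
  refine (h.limR_subset_domReg hP hQ hi hik).antisymm fun z hz => ?_
  have hlimS : ∀ w, w ∉ ⋃ n, R n i → infDist w (limS S (i + 1)) ≤ infDist w (limR R (i - 1)) :=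
    fun w hw => (h.limS_eq_domReg hP hQ hQcl hi hik).subset (h.mem_limS_of_notMem_iUnion hi hik hw)
  by_cases hzR : z ∈ ⋃ n, R n i
  · exact subset_closure hzR
  have hdisj := h.disjoint_limR_limS hP hQ hPcl hQcl hPQ (j := i - 1) (by omega)
  rw [Nat.sub_add_cancel hi] at hdisj
  refine closure_mono (fun w hw => not_not.1 fun hwR => (hlimS w hwR).not_gt hw)
    (mem_closure_setOf_infDist_lt isClosed_closure (h.limR_nonempty hP (by omega))
      (h.isClosed_limS hP hQ hQcl (by omega) hik) (h.limS_nonempty hQ (by omega) hik)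
      (hdisj.mono_right (h.limS_succ_subset_limS hP hQ hi hik)) (le_antisymm hz (hlimS z hzR)))

theorem iteration_gives_kgradation_general {d : ℕ} (k : ℕ)
    (P Q : Set (EuclideanSpace ℝ (Fin d))) (hPne : P.Nonempty) (hQne : Q.Nonempty)
    (hPcl : IsClosed P) (hQcl : IsClosed Q) (hPQ : Disjoint P Q)
    (R S : ℕ → ℕ → Set (EuclideanSpace ℝ (Fin d)))
    -- conventions `R^n_0 = P` and `S^n_k = Q` for all `n`
    (hconv : ∀ n, R n 0 = P ∧ S n k = Q)
    -- the initial tuple belongs to the lattice `𝓛`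
    (hlat : ∀ i, 0 < i → i < k → P ⊆ R 0 i ∧ Q ⊆ S 0 i ∧ R 0 i ∪ S 0 i = univ)
    -- the iteration `(R^{n+1}, S^{n+1}) = F (R^n, S^n)`
    (hiter : ∀ n, ∀ i, 0 < i → i < k →
      R (n + 1) i = domReg (R n (i - 1)) (S n (i + 1)) ∧
      S (n + 1) i = domReg (S n (i + 1)) (R n (i - 1)))
    -- the initial tuple is below its image: `(R^0, S^0) ≤ F (R^0, S^0)`
    (hle : ∀ i, 0 < i → i < k → R 0 i ⊆ R 1 i ∧ S 1 i ⊆ S 0 i) :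
    (closure (⋃ n, R n 0) = P) ∧ ((⋂ n, S n k) = Q) ∧
      ∀ i, 0 < i → i < k →
        closure (⋃ n, R n i)
          = domReg (closure (⋃ n, R n (i - 1))) (⋂ n, S n (i + 1)) ∧
        (⋂ n, S n i)
          = domReg (⋂ n, S n (i + 1)) (closure (⋃ n, R n (i - 1))) := by
  have h : IsDomIteration k P Q R S :=
    { R_zero := fun n => (hconv n).1
      S_top := fun n => (hconv n).2
      subset_R_zero := fun i hi hik => (hlat i hi hik).1
      subset_S_zero := fun i hi hik => (hlat i hi hik).2.1
      R_zero_union_S_zero := fun i hi hik => (hlat i hi hik).2.2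
      R_succ := fun n i hi hik => (hiter n i hi hik).1
      S_succ := fun n i hi hik => (hiter n i hi hik).2
      R_zero_subset_R_one := fun i hi hik => (hle i hi hik).1
      S_one_subset_S_zero := fun i hi hik => (hle i hi hik).2 }
  exact ⟨h.limR_zero hPcl, h.limS_top, fun i hi hik =>
    ⟨h.limR_eq_domReg hPne hQne hPcl hQcl hPQ hi hik, h.limS_eq_domReg hPne hQne hQcl hi hik⟩⟩

/-- Iterating the operator `F` from an element below its image yields, in the limit,
a `k`-gradation `(closure (R^∞ i), S^∞ i)` between `P` and `Q` in Euclidean space. -/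
theorem iteration_gives_kgradation {d : ℕ} (k : ℕ) (hk : 2 ≤ k)
    (P Q : Set (EuclideanSpace ℝ (Fin d))) (hPne : P.Nonempty) (hQne : Q.Nonempty)
    (hPcl : IsClosed P) (hQcl : IsClosed Q) (hPQ : Disjoint P Q)
    (R S : ℕ → ℕ → Set (EuclideanSpace ℝ (Fin d)))
    -- conventions `R^n_0 = P` and `S^n_k = Q` for all `n`
    (hconv : ∀ n, R n 0 = P ∧ S n k = Q)
    -- the initial tuple belongs to the lattice `𝓛`
    (hlat : ∀ i, 0 < i → i < k → P ⊆ R 0 i ∧ Q ⊆ S 0 i ∧ R 0 i ∪ S 0 i = univ)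
    -- the iteration `(R^{n+1}, S^{n+1}) = F (R^n, S^n)`
    (hiter : ∀ n, ∀ i, 0 < i → i < k →
      R (n + 1) i = domReg (R n (i - 1)) (S n (i + 1)) ∧
      S (n + 1) i = domReg (S n (i + 1)) (R n (i - 1)))
    -- the initial tuple is below its image: `(R^0, S^0) ≤ F (R^0, S^0)`
    (hle : ∀ i, 0 < i → i < k → R 0 i ⊆ R 1 i ∧ S 1 i ⊆ S 0 i) :
    (closure (⋃ n, R n 0) = P) ∧ ((⋂ n, S n k) = Q) ∧
      ∀ i, 0 < i → i < k →
        closure (⋃ n, R n i)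
          = domReg (closure (⋃ n, R n (i - 1))) (⋂ n, S n (i + 1)) ∧
        (⋂ n, S n i)
          = domReg (⋂ n, S n (i + 1)) (closure (⋃ n, R n (i - 1))) :=
  iteration_gives_kgradation_general k P Q hPne hQne hPcl hQcl hPQ R S hconv hlat hiter hle
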